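/- arXiv:2303.17113 — 2 statements merged into one kernel-verified Lean document; each statement's English description precedes it below -/
import Mathlib

section
/- (Uniqueness of the effective constant.) Let c : ℝⁿ → ℝ be continuous and ℤⁿ-periodic, and let F(X,p,y) := −tr{(I_n − (p⊗p)/(1+|p|²))X} − c(y)√(1+|p|²). Fix p ∈ ℝⁿ. Suppose v₁, v₂ ∈ C²(ℝⁿ) are ℤⁿ-periodic and there are real numbers μ₁, μ₂ with F(D²v₁, p+Dv₁, y) = μ₁ and F(D²v₂, p+Dv₂, y) = μ₂ for all y ∈ ℝⁿ. Then μ₁ = μ₂. -/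
open Set

noncomputable section

/-- Spatial gradient of `f : ℝⁿ → ℝ` as a Euclidean vector. -/
def sgrad (n : ℕ) (f : EuclideanSpace ℝ (Fin n) → ℝ) (x : EuclideanSpace ℝ (Fin n)) :
    EuclideanSpace ℝ (Fin n) :=
  (EuclideanSpace.equiv (Fin n) ℝ).symm fun i => fderiv ℝ f x (EuclideanSpace.single i 1)

/-- Spatial Hessian of `f : ℝⁿ → ℝ` as an n×n matrix. -/
def shess (n : ℕ) (f : EuclideanSpace ℝ (Fin n) → ℝ) (x : EuclideanSpace ℝ (Fin n)) :
    Matrix (Fin n) (Fin n) ℝ :=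
  fun i j => fderiv ℝ (fun y => fderiv ℝ f y (EuclideanSpace.single j 1)) x
    (EuclideanSpace.single i 1)

/-- The coefficient matrix `a(p) = I_n − (p⊗p)/(1+|p|²)`. -/
def amat (n : ℕ) (p : EuclideanSpace ℝ (Fin n)) : Matrix (Fin n) (Fin n) ℝ :=
  fun i j => (if i = j then (1:ℝ) else 0) - p i * p j / (1 + ‖p‖ ^ 2)

/-- `F(X,p,y) = −tr{a(p)X} − c(y)√(1+|p|²)`. -/
def Fop (n : ℕ) (c : EuclideanSpace ℝ (Fin n) → ℝ) (X : Matrix (Fin n) (Fin n) ℝ)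
    (p y : EuclideanSpace ℝ (Fin n)) : ℝ :=
  -Matrix.trace (amat n p * X) - c y * Real.sqrt (1 + ‖p‖ ^ 2)

/-- `ℤⁿ`-periodicity. -/
def ZPeriodic (n : ℕ) (v : EuclideanSpace ℝ (Fin n) → ℝ) : Prop :=
  ∀ (y : EuclideanSpace ℝ (Fin n)) (k : Fin n → ℤ),
    v (y + (EuclideanSpace.equiv (Fin n) ℝ).symm fun i => (k i : ℝ)) = v y

/-! At a maximum point `y₀` of the periodic function `v₁ - v₂` (which exists by compactness of
the torus) the gradients of `v₁` and `v₂` agree, so both equations are evaluated at the same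
slope `q = p + Dv₁(y₀)`, while `D²v₁(y₀) ≤ D²v₂(y₀)`. As `a(q)` is positive semidefinite,
`X ↦ -tr(a(q) X)` is antitone, whence `μ₂ ≤ μ₁`; exchanging the roles gives `μ₁ = μ₂`. -/

open Filter Topology Matrix
open scoped MatrixOrder ComplexOrder

theorem Matrix.PosSemidef.trace_mul_nonneg {𝕜 n : Type*} [RCLike 𝕜] [Fintype n] [DecidableEq n]
    {A B : Matrix n n 𝕜} (hA : A.PosSemidef) (hB : B.PosSemidef) : 0 ≤ (A * B).trace := by
  set S := CFC.sqrt A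
  have hS : Sᴴ = S := (CFC.sqrt_nonneg A).posSemidef.isHermitian
  have hA' : A = S * Sᴴ := by rw [hS, CFC.sqrt_mul_sqrt_self A hA.nonneg]
  rw [hA', Matrix.mul_assoc, trace_mul_comm]
  exact (hB.conjTranspose_mul_mul_same S).trace_nonneg

theorem amat_posSemidef (n : ℕ) (q : EuclideanSpace ℝ (Fin n)) : (amat n q).PosSemidef := by
  refine .of_dotProduct_mulVec_nonneg ?_ fun x => ?_
  · ext i j
    simp only [amat, conjTranspose_apply, star_trivial, eq_comm (a := i)]
    ring
  · have hform : star x ⬝ᵥ (amat n q *ᵥ x)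
        = ∑ i, x i ^ 2 - (∑ i, q i * x i) ^ 2 / (1 + ‖q‖ ^ 2) := by
      simp only [amat, dotProduct, mulVec, star_trivial, sub_mul, ite_mul, one_mul, zero_mul,
        Finset.sum_sub_distrib, Finset.sum_ite_eq, Finset.mem_univ, if_true, mul_sub,
        Finset.mul_sum]
      rw [sq (∑ i, q i * x i), Finset.sum_mul_sum, Finset.sum_div]
      congr 1
      · exact Finset.sum_congr rfl fun i _ => by ring
      · refine Finset.sum_congr rfl fun i _ => ?_
        rw [Finset.sum_div]
        exact Finset.sum_congr rfl fun j _ => by ring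
    have hnorm : ‖q‖ ^ 2 = ∑ i, q i ^ 2 := by simp [EuclideanSpace.norm_sq_eq]
    have hcs := Finset.sum_mul_sq_le_sq_mul_sq Finset.univ (fun i => q i) x
    have hx : 0 ≤ ∑ i, x i ^ 2 := by positivity
    rw [hform, sub_nonneg, div_le_iff₀ (by positivity), hnorm]
    nlinarith

theorem Fop_le_Fop_of_posSemidef_sub {n : ℕ} (c : EuclideanSpace ℝ (Fin n) → ℝ)
    {X Y : Matrix (Fin n) (Fin n) ℝ} (q y : EuclideanSpace ℝ (Fin n)) (h : (Y - X).PosSemidef) :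
    Fop n c Y q y ≤ Fop n c X q y := by
  have htr := (amat_posSemidef n q).trace_mul_nonneg h
  rw [Matrix.mul_sub, trace_sub] at htr
  unfold Fop
  linarith

theorem deriv_deriv_nonpos_of_isLocalMax {g : ℝ → ℝ} {x₀ : ℝ} (hg : Differentiable ℝ g)
    (h : IsLocalMax g x₀) : deriv (deriv g) x₀ ≤ 0 := by
  by_contra! hpos
  -- `g'` vanishes at `x₀` and increases through it, so `g` increases just right of `x₀`.
  have hincr : ∀ᶠ x in 𝓝[>] x₀, 0 < deriv g x :=
    deriv_pos_right_of_sign_deriv <| nhdsWithin_le_nhds <|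
      eventually_nhdsWithin_sign_eq_of_deriv_pos hpos h.deriv_eq_zero
  obtain ⟨b, hb, hsub⟩ := mem_nhdsGT_iff_exists_Ioo_subset.mp
    (hincr.and (nhdsWithin_le_nhds h))
  have hx : (x₀ + b) / 2 ∈ Ioo x₀ b := ⟨by linarith [mem_Ioi.mp hb], by linarith [mem_Ioi.mp hb]⟩
  have hmono : StrictMonoOn g (Icc x₀ ((x₀ + b) / 2)) :=
    strictMonoOn_of_deriv_pos (convex_Icc _ _) hg.continuous.continuousOn fun t ht => by
      rw [interior_Icc] at ht
      exact (hsub ⟨ht.1, ht.2.trans hx.2⟩).1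
  exact (hsub hx).2.not_gt (hmono (left_mem_Icc.mpr hx.1.le) (right_mem_Icc.mpr hx.1.le) hx.1)

theorem fderiv_fderiv_apply_self_nonpos_of_isLocalMax {E : Type*} [NormedAddCommGroup E]
    [NormedSpace ℝ E] {f : E → ℝ} {x : E} (hf : ContDiff ℝ 2 f) (h : IsLocalMax f x) (u : E) :
    fderiv ℝ (fderiv ℝ f) x u u ≤ 0 := by
  have hline : ∀ t : ℝ, HasDerivAt (fun s : ℝ => x + s • u) u t := fun t => by
    simpa using ((hasDerivAt_id t).smul_const u).const_add x
  have hdf : Differentiable ℝ (fderiv ℝ f) :=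
    (hf.fderiv_right (m := 1) le_rfl).differentiable one_ne_zero
  have hderiv : deriv (fun t => f (x + t • u)) = fun t => fderiv ℝ f (x + t • u) u :=
    funext fun t => ((hf.differentiable two_ne_zero _).hasFDerivAt.comp_hasDerivAt t
      (hline t)).deriv
  have hderiv2 : HasDerivAt (fun t : ℝ => fderiv ℝ f (x + t • u) u)
      (fderiv ℝ (fderiv ℝ f) x u u) 0 := by
    have := ((hdf _).hasFDerivAt.comp_hasDerivAt 0 (hline 0)).clm_apply (hasDerivAt_const 0 u)
    simpa using this
  have hmax : IsLocalMax (fun t : ℝ => f (x + t • u)) 0 :=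
    IsLocalMax.comp_continuous (by simpa using h) (hline 0).continuousAt
  rw [← hderiv2.deriv, ← hderiv]
  exact deriv_deriv_nonpos_of_isLocalMax
    (hf.differentiable two_ne_zero |>.comp (fun t => (hline t).differentiableAt)) hmax

theorem shess_eq_toMatrix {n : ℕ} {w : EuclideanSpace ℝ (Fin n) → ℝ} (hw : ContDiff ℝ 2 w)
    (y : EuclideanSpace ℝ (Fin n)) :
    shess n w y = LinearMap.BilinForm.toMatrix (EuclideanSpace.basisFun (Fin n) ℝ).toBasis
      (fderiv ℝ (fderiv ℝ w) y).toLinearMap₁₂ := by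
  have hdf : Differentiable ℝ (fderiv ℝ w) :=
    (hw.fderiv_right (m := 1) le_rfl).differentiable one_ne_zero
  ext i j
  simp [shess, fderiv_clm_apply (hdf y) (differentiableAt_const _)]

theorem shess_sub {n : ℕ} {v₁ v₂ : EuclideanSpace ℝ (Fin n) → ℝ} (hv₁ : ContDiff ℝ 2 v₁)
    (hv₂ : ContDiff ℝ 2 v₂) (y : EuclideanSpace ℝ (Fin n)) :
    shess n (v₁ - v₂) y = shess n v₁ y - shess n v₂ y := by
  have hdf : ∀ {v : EuclideanSpace ℝ (Fin n) → ℝ}, ContDiff ℝ 2 v → Differentiable ℝ (fderiv ℝ v) :=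
    fun hv => (hv.fderiv_right (m := 1) le_rfl).differentiable one_ne_zero
  have hD2 : fderiv ℝ (fderiv ℝ (v₁ - v₂)) y
      = fderiv ℝ (fderiv ℝ v₁) y - fderiv ℝ (fderiv ℝ v₂) y := by
    have hD : fderiv ℝ (v₁ - v₂) = fderiv ℝ v₁ - fderiv ℝ v₂ := funext fun z =>
      fderiv_sub (hv₁.differentiable two_ne_zero z) (hv₂.differentiable two_ne_zero z)
    rw [hD, fderiv_sub (hdf hv₁ y) (hdf hv₂ y)]
  rw [shess_eq_toMatrix (w := v₁ - v₂) (hv₁.sub hv₂), shess_eq_toMatrix hv₁,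
    shess_eq_toMatrix hv₂, hD2, map_sub, map_sub]

theorem neg_shess_posSemidef_of_isLocalMax {n : ℕ} {w : EuclideanSpace ℝ (Fin n) → ℝ}
    {y : EuclideanSpace ℝ (Fin n)} (hw : ContDiff ℝ 2 w) (h : IsLocalMax w y) :
    (-shess n w y).PosSemidef := by
  rw [shess_eq_toMatrix hw, ← map_neg]
  refine .of_dotProduct_mulVec_nonneg ?_ fun x => ?_
  · ext i j
    simpa using (hw.contDiffAt.isSymmSndFDerivAt (by simp)).eq _ _
  · rw [star_trivial, LinearMap.BilinForm.dotProduct_toMatrix_mulVec]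
    simpa using fderiv_fderiv_apply_self_nonpos_of_isLocalMax hw h _

theorem sgrad_eq_of_isLocalMax_sub {n : ℕ} {v₁ v₂ : EuclideanSpace ℝ (Fin n) → ℝ}
    {y : EuclideanSpace ℝ (Fin n)} (hv₁ : DifferentiableAt ℝ v₁ y)
    (hv₂ : DifferentiableAt ℝ v₂ y) (h : IsLocalMax (v₁ - v₂) y) :
    sgrad n v₁ y = sgrad n v₂ y := by
  have hD := h.fderiv_eq_zero
  rw [fderiv_sub hv₁ hv₂, sub_eq_zero] at hD
  simp [sgrad, hD]

theorem Fop_le_of_isLocalMax_sub {n : ℕ} (c : EuclideanSpace ℝ (Fin n) → ℝ)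
    (p : EuclideanSpace ℝ (Fin n)) {v₁ v₂ : EuclideanSpace ℝ (Fin n) → ℝ}
    {y : EuclideanSpace ℝ (Fin n)} (hv₁ : ContDiff ℝ 2 v₁) (hv₂ : ContDiff ℝ 2 v₂)
    (h : IsLocalMax (v₁ - v₂) y) :
    Fop n c (shess n v₂ y) (p + sgrad n v₂ y) y ≤ Fop n c (shess n v₁ y) (p + sgrad n v₁ y) y := by
  rw [sgrad_eq_of_isLocalMax_sub (hv₁.differentiable two_ne_zero y)
    (hv₂.differentiable two_ne_zero y) h]
  refine Fop_le_Fop_of_posSemidef_sub c _ y ?_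
  rw [← neg_sub, ← shess_sub hv₁ hv₂]
  exact neg_shess_posSemidef_of_isLocalMax (hv₁.sub hv₂) h

theorem ZPeriodic.sub {n : ℕ} {v₁ v₂ : EuclideanSpace ℝ (Fin n) → ℝ} (h₁ : ZPeriodic n v₁)
    (h₂ : ZPeriodic n v₂) : ZPeriodic n (v₁ - v₂) := fun y k => by
  simp only [Pi.sub_apply, h₁ y k, h₂ y k]

theorem ZPeriodic.exists_forall_le {n : ℕ} {v : EuclideanSpace ℝ (Fin n) → ℝ}
    (hper : ZPeriodic n v) (hv : Continuous v) : ∃ y₀, ∀ y, v y ≤ v y₀ := by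
  let e := (EuclideanSpace.equiv (Fin n) ℝ).symm
  obtain ⟨x₀, -, hx₀⟩ := isCompact_Icc.exists_isMaxOn (nonempty_Icc.2 zero_le_one)
    (hv.comp e.continuous).continuousOn
  refine ⟨e x₀, fun y => ?_⟩
  have hfract : v (e fun i => Int.fract (y i)) = v y := by
    rw [← hper (e fun i => Int.fract (y i)) fun i => ⌊y i⌋]
    congr
    ext i
    simp [e, Int.fract_add_floor]
  rw [← hfract]
  exact hx₀ ⟨fun i => Int.fract_nonneg _, fun i => (Int.fract_lt_one _).le⟩

theorem le_of_periodic_solutions {n : ℕ} (c : EuclideanSpace ℝ (Fin n) → ℝ)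
    (p : EuclideanSpace ℝ (Fin n)) {v₁ v₂ : EuclideanSpace ℝ (Fin n) → ℝ} {μ₁ μ₂ : ℝ}
    (hv₁ : ContDiff ℝ 2 v₁) (hv₂ : ContDiff ℝ 2 v₂) (hp₁ : ZPeriodic n v₁) (hp₂ : ZPeriodic n v₂)
    (he₁ : ∀ y, Fop n c (shess n v₁ y) (p + sgrad n v₁ y) y = μ₁)
    (he₂ : ∀ y, Fop n c (shess n v₂ y) (p + sgrad n v₂ y) y = μ₂) :
    μ₂ ≤ μ₁ := by
  obtain ⟨y₀, hy₀⟩ := (hp₁.sub hp₂).exists_forall_le (hv₁.sub hv₂).continuous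
  rw [← he₁ y₀, ← he₂ y₀]
  exact Fop_le_of_isLocalMax_sub c p hv₁ hv₂ (Eventually.of_forall hy₀)

theorem stmt_8_general (n : ℕ) (c : EuclideanSpace ℝ (Fin n) → ℝ)
    (p : EuclideanSpace ℝ (Fin n))
    (v₁ v₂ : EuclideanSpace ℝ (Fin n) → ℝ)
    (hv₁ : ContDiff ℝ 2 v₁) (hv₂ : ContDiff ℝ 2 v₂)
    (hp₁ : ZPeriodic n v₁) (hp₂ : ZPeriodic n v₂) (μ₁ μ₂ : ℝ)
    (he₁ : ∀ y, Fop n c (shess n v₁ y) (p + sgrad n v₁ y) y = μ₁)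
    (he₂ : ∀ y, Fop n c (shess n v₂ y) (p + sgrad n v₂ y) y = μ₂) :
    μ₁ = μ₂ :=
  le_antisymm (le_of_periodic_solutions c p hv₂ hv₁ hp₂ hp₁ he₂ he₁)
    (le_of_periodic_solutions c p hv₁ hv₂ hp₁ hp₂ he₁ he₂)

theorem stmt_8 (n : ℕ) (c : EuclideanSpace ℝ (Fin n) → ℝ)
    (hc : Continuous c) (hper : ZPeriodic n c) (p : EuclideanSpace ℝ (Fin n))
    (v₁ v₂ : EuclideanSpace ℝ (Fin n) → ℝ)
    (hv₁ : ContDiff ℝ 2 v₁) (hv₂ : ContDiff ℝ 2 v₂)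
    (hp₁ : ZPeriodic n v₁) (hp₂ : ZPeriodic n v₂) (μ₁ μ₂ : ℝ)
    (he₁ : ∀ y, Fop n c (shess n v₁ y) (p + sgrad n v₁ y) y = μ₁)
    (he₂ : ∀ y, Fop n c (shess n v₂ y) (p + sgrad n v₂ y) y = μ₂) :
    μ₁ = μ₂ :=
  stmt_8_general n c p v₁ v₂ hv₁ hv₂ hp₁ hp₂ μ₁ μ₂ he₁ he₂
end
end

section
/- (Self-similarity at the origin.) Let w̄ : ℝⁿ×[0,∞) → ℝ be continuous, globally Lipschitz in x uniformly in t, C² in x and C¹ in t on ℝⁿ×(0,∞), satisfying w̄_t = tr{a(Dw̄)D²w̄} pointwise on ℝⁿ×(0,∞) and w̄(x,0) = |x|. Suppose that any two such solutions with initial data |x| coincide. Then w̄(λx, λ²t) = λ w̄(x,t) for all λ > 0, x ∈ ℝⁿ, t ≥ 0; in particular, w̄(0,t) = √t · w̄(0,1) for all t ≥ 0. -/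
open Set

noncomputable section

/-- The (unforced) graphical MCF right-hand side `tr{a(Dw)D²w}` at `(x,t)`. -/
def mcfPure (n : ℕ) (w : EuclideanSpace ℝ (Fin n) → ℝ → ℝ)
    (x : EuclideanSpace ℝ (Fin n)) (t : ℝ) : ℝ :=
  Matrix.trace (amat n (sgrad n (fun y => w y t) x) * shess n (fun y => w y t) x)

/-- `w` is a classical solution of `w_t = tr{a(Dw)D²w}` on `ℝⁿ×(0,∞)` with initial data `w₀`. -/
def IsMCFSol (n : ℕ) (w₀ : EuclideanSpace ℝ (Fin n) → ℝ)
    (w : EuclideanSpace ℝ (Fin n) → ℝ → ℝ) : Prop :=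
  ContinuousOn (fun q : EuclideanSpace ℝ (Fin n) × ℝ => w q.1 q.2) (univ ×ˢ Ici 0) ∧
  (∀ t ∈ Ioi (0:ℝ), ContDiff ℝ 2 (fun x => w x t)) ∧
  (∀ x, ContDiffOn ℝ 1 (w x) (Ioi 0)) ∧
  (∀ x, ∀ t ∈ Ioi (0:ℝ), deriv (w x) t = mcfPure n w x t) ∧
  (∀ x, w x 0 = w₀ x)

/-- `w` is globally Lipschitz in `x`, uniformly in `t ≥ 0`. -/
def GlobLipX (n : ℕ) (w : EuclideanSpace ℝ (Fin n) → ℝ → ℝ) : Prop :=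
  ∃ L : NNReal, ∀ t ∈ Ici (0:ℝ), LipschitzWith L (fun x => w x t)

/-! The equation `w_t = tr{a(Dw)D²w}` and the uniform Lipschitz bound are invariant under the
parabolic rescaling `w ↦ λ⁻¹ w(λx, λ²t)`, and this rescaling fixes the initial datum `|x|`. So the
rescaled `w̄` is another Lipschitz solution with the same data, and uniqueness makes it equal to
`w̄`. Taking `x = 0` and `λ = √t` gives the value at the origin. -/

section ParabolicRescaling

variable {n : ℕ}

theorem fderiv_inv_smul_comp_smul {𝕜 E F : Type*} [NontriviallyNormedField 𝕜]
    [NormedAddCommGroup E] [NormedSpace 𝕜 E] [NormedAddCommGroup F] [NormedSpace 𝕜 F]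
    {c : 𝕜} (hc : c ≠ 0) (f : E → F) :
    fderiv 𝕜 (fun y => c⁻¹ • f (c • y)) = fun x => fderiv 𝕜 f (c • x) := by
  ext1 x
  rw [show (fun y => c⁻¹ • f (c • y)) = c⁻¹ • (f <| c • ·) from rfl,
    fderiv_const_smul_field, Pi.smul_apply, fderiv_comp_smul, inv_smul_smul₀ hc]

theorem sgrad_inv_mul_comp_smul {c : ℝ} (hc : c ≠ 0) (f : EuclideanSpace ℝ (Fin n) → ℝ)
    (x : EuclideanSpace ℝ (Fin n)) :
    sgrad n (fun y => c⁻¹ * f (c • y)) x = sgrad n f (c • x) := by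
  simp only [sgrad, ← smul_eq_mul, fderiv_inv_smul_comp_smul hc]

theorem shess_inv_mul_comp_smul {c : ℝ} (hc : c ≠ 0) (f : EuclideanSpace ℝ (Fin n) → ℝ)
    (x : EuclideanSpace ℝ (Fin n)) :
    shess n (fun y => c⁻¹ * f (c • y)) x = c • shess n f (c • x) := by
  ext i j
  simp only [shess, ← smul_eq_mul (a := c⁻¹), fderiv_inv_smul_comp_smul hc, Matrix.smul_apply]
  rw [fderiv_comp_smul (f := fun y => fderiv ℝ f y (EuclideanSpace.single j 1))]
  rfl

def parabolicRescale {E : Type*} [SMul ℝ E] (lam : ℝ) (w : E → ℝ → ℝ) : E → ℝ → ℝ :=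
  fun x t => lam⁻¹ * w (lam • x) (lam ^ 2 * t)

theorem mcfPure_parabolicRescale {lam : ℝ} (hlam : lam ≠ 0)
    (w : EuclideanSpace ℝ (Fin n) → ℝ → ℝ) (x : EuclideanSpace ℝ (Fin n)) (t : ℝ) :
    mcfPure n (parabolicRescale lam w) x t = lam * mcfPure n w (lam • x) (lam ^ 2 * t) := by
  simp only [mcfPure, parabolicRescale, sgrad_inv_mul_comp_smul hlam (fun y => w y (lam ^ 2 * t)),
    shess_inv_mul_comp_smul hlam (fun y => w y (lam ^ 2 * t)), Matrix.mul_smul, Matrix.trace_smul,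
    smul_eq_mul]

theorem deriv_parabolicRescale {E : Type*} [SMul ℝ E] (lam : ℝ) (w : E → ℝ → ℝ) (x : E)
    (t : ℝ) : deriv (parabolicRescale lam w x) t = lam * deriv (w (lam • x)) (lam ^ 2 * t) := by
  show deriv (fun t => lam⁻¹ * w (lam • x) (lam ^ 2 * t)) t = _
  simp only [deriv_const_mul_field', deriv_comp_mul_left, smul_eq_mul]
  rcases eq_or_ne lam 0 with rfl | hlam
  · simp
  · field_simp

theorem IsMCFSol.parabolicRescale {lam : ℝ} (hlam : 0 < lam) {w₀ : EuclideanSpace ℝ (Fin n) → ℝ}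
    {w : EuclideanSpace ℝ (Fin n) → ℝ → ℝ} (hw : IsMCFSol n w₀ w) :
    IsMCFSol n (fun x => lam⁻¹ * w₀ (lam • x)) (parabolicRescale lam w) := by
  obtain ⟨hcont, hC2, hC1, hpde, hinit⟩ := hw
  have hscale : MapsTo (fun t : ℝ => lam ^ 2 * t) (Ioi 0) (Ioi 0) := fun t ht =>
    mul_pos (pow_pos hlam 2) ht
  refine ⟨?_, fun t ht => ?_, fun x => ?_, fun x t ht => ?_, fun x => ?_⟩
  · have hmaps : MapsTo (fun q : EuclideanSpace ℝ (Fin n) × ℝ => (lam • q.1, lam ^ 2 * q.2))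
        (univ ×ˢ Ici 0) (univ ×ˢ Ici 0) := fun q hq =>
      ⟨trivial, mul_nonneg (sq_nonneg lam) hq.2⟩
    exact continuousOn_const.mul (hcont.comp (by fun_prop) hmaps)
  · exact contDiff_const.mul ((hC2 _ (hscale ht)).comp (contDiff_const_smul lam))
  · exact contDiffOn_const.mul ((hC1 _).comp (contDiff_const.mul contDiff_id).contDiffOn hscale)
  · rw [deriv_parabolicRescale, mcfPure_parabolicRescale hlam.ne', hpde _ _ (hscale ht)]
  · simp only [_root_.parabolicRescale, mul_zero, hinit]

theorem GlobLipX.parabolicRescale {lam : ℝ} (hlam : 0 < lam)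
    {w : EuclideanSpace ℝ (Fin n) → ℝ → ℝ} (hw : GlobLipX n w) :
    GlobLipX n (parabolicRescale lam w) := by
  obtain ⟨L, hL⟩ := hw
  refine ⟨L, fun t ht => ?_⟩
  have hlip := (lipschitzWith_smul lam⁻¹).comp
    ((hL _ (mul_nonneg (sq_nonneg lam) ht)).comp
      (lipschitzWith_smul (β := EuclideanSpace ℝ (Fin n)) lam))
  rwa [nnnorm_inv, mul_comm, mul_assoc, mul_inv_cancel₀ (by simpa using hlam.ne'), mul_one]
    at hlip

end ParabolicRescaling

theorem stmt_12 (n : ℕ) (wb : EuclideanSpace ℝ (Fin n) → ℝ → ℝ)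
    (hsol : IsMCFSol n (fun x => ‖x‖) wb) (hlip : GlobLipX n wb)
    (huniq : ∀ w₁ w₂ : EuclideanSpace ℝ (Fin n) → ℝ → ℝ,
      IsMCFSol n (fun x => ‖x‖) w₁ → GlobLipX n w₁ →
      IsMCFSol n (fun x => ‖x‖) w₂ → GlobLipX n w₂ →
      ∀ x, ∀ t ∈ Ici (0:ℝ), w₁ x t = w₂ x t) :
    (∀ lam > (0:ℝ), ∀ x, ∀ t ∈ Ici (0:ℝ), wb (lam • x) (lam ^ 2 * t) = lam * wb x t) ∧
    (∀ t ∈ Ici (0:ℝ), wb 0 t = Real.sqrt t * wb 0 1) := by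
  have hscaling : ∀ lam > (0:ℝ), ∀ x, ∀ t ∈ Ici (0:ℝ),
      wb (lam • x) (lam ^ 2 * t) = lam * wb x t := by
    intro lam hlam x t ht
    have hnorm : (fun x : EuclideanSpace ℝ (Fin n) => lam⁻¹ * ‖lam • x‖) = fun x => ‖x‖ := by
      ext x
      rw [norm_smul, Real.norm_of_nonneg hlam.le, inv_mul_cancel_left₀ hlam.ne']
    have hrescaled := hsol.parabolicRescale hlam
    rw [hnorm] at hrescaled
    have heq := huniq _ _ hsol hlip hrescaled (hlip.parabolicRescale hlam) x t ht
    rw [heq, parabolicRescale, mul_inv_cancel_left₀ hlam.ne']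
  refine ⟨hscaling, fun t ht => ?_⟩
  rcases (mem_Ici.1 ht).eq_or_lt with rfl | ht
  · simp [hsol.2.2.2.2]
  · simpa [Real.sq_sqrt ht.le] using
      hscaling (√t) (Real.sqrt_pos.2 ht) 0 1 (mem_Ici.2 zero_le_one)
end
end
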